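/- The Naive KAM implements Closed Call-by-Name: for every closed λ-term t, there is a complete weak-head-reduction sequence t →wh^n u if and only if there is a complete Naive KAM run ρ from the initial state (t, ε, ε) whose final state decodes to u and which contains exactly n β-transitions. -/

import Mathlib

set_option autoImplicit false

/-! λ-terms with variable names in ℕ. -/
inductive Term : Type
  | var : ℕ → Term
  | lam : ℕ → Term → Term
  | app : Term → Term → Term
deriving DecidableEq

namespace Term

/-- Free variables. -/
def fv : Term → Finset ℕ
  | var x => {x}
  | lam x t => fv t \ {x}
  | app t u => fv t ∪ fv u

/-- A term is closed if it has no free variables. -/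
def closed (t : Term) : Prop := t.fv = ∅

/-- Substitution of `u` for the free occurrences of `x`; it is capture-avoiding
whenever the substituted term `u` is closed, which is the only case arising in
Closed Call-by-Name. -/
def subst (x : ℕ) (u : Term) : Term → Term
  | var y => if y = x then u else var y
  | lam y t => if y = x then lam y t else lam y (subst x u t)
  | app t r => app (subst x u t) (subst x u r)

/-- In-order (left-to-right) enumeration of the constructors (as subterm occurrences). -/
def inorder : Term → List Term
  | var x => [var x]
  | lam x t => lam x t :: inorder t
  | app t u => inorder t ++ app t u :: inorder u

/-- Membership in the deterministic λ-calculus `Λdet`: the right subterm of every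
application is a variable or an abstraction. -/
def IsDet : Term → Prop
  | var _ => True
  | lam _ t => IsDet t
  | app t u => IsDet t ∧ IsDet u ∧ ((∃ x, u = var x) ∨ ∃ x r, u = lam x r)

end Term

/-- Weak head reduction: `(λx.t) u r1 … rh →wh t{x:=u} r1 … rh`. -/
inductive Whr : Term → Term → Prop
  | beta (x : ℕ) (t u : Term) : Whr (Term.app (Term.lam x t) u) (Term.subst x u t)
  | appL {t t' : Term} (u : Term) : Whr t t' → Whr (Term.app t u) (Term.app t' u)

def WhNormal (t : Term) : Prop := ∀ u, ¬ Whr t u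

/-- `NSteps R n a b`: exactly `n` `R`-steps from `a` to `b`. -/
inductive NSteps {α : Type _} (R : α → α → Prop) : ℕ → α → α → Prop
  | refl (a : α) : NSteps R 0 a a
  | head {a b c : α} {n : ℕ} : R a b → NSteps R n b c → NSteps R (n + 1) a c

/-! Closures and (local) environments. -/
mutual
  inductive Clo : Type
    | mk : Term → Env → Clo
  inductive Env : Type
    | nil : Env
    | cons : ℕ → Clo → Env → Env
end

def Env.lookup : Env → ℕ → Option Clo
  | .nil, _ => none
  | .cons y c e, x => if y = x then some c else Env.lookup e x

def Env.dom : Env → Finset ℕ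
  | .nil => ∅
  | .cons x _ e => insert x (Env.dom e)

/-- Restriction `e|s` of an environment to a set of variables. -/
def Env.restrict : Env → Finset ℕ → Env
  | .nil, _ => .nil
  | .cons x c e, s => if x ∈ s then .cons x c (Env.restrict e s) else Env.restrict e s

mutual
  /-- Decoding of a closure into a λ-term. -/
  def Clo.decode : Clo → Term
    | .mk t e => Env.decode t e
  /-- Decoding: `(t, ε)↓ = t`, `(t, [x←c]·e)↓ = (t{x:=c↓}, e)↓`. -/
  def Env.decode : Term → Env → Term
    | t, .nil => t
    | t, .cons x c e => Env.decode (Term.subst x (Clo.decode c) t) e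
end

mutual
  /-- Hereditary number of closures in a closure (without sharing). -/
  def Clo.count : Clo → ℕ
    | .mk _ e => 1 + Env.count e
  def Env.count : Env → ℕ
    | .nil => 0
    | .cons _ c e => Clo.count c + Env.count e
end

mutual
  /-- A closure `(t,e)` is closed: `fv t ⊆ dom e` and hereditarily so. -/
  def Clo.Closed : Clo → Prop
    | .mk t e => t.fv ⊆ e.dom ∧ Env.ClosedE e
  def Env.ClosedE : Env → Prop
    | .nil => True
    | .cons _ c e => Clo.Closed c ∧ Env.ClosedE e
end

mutual
  /-- Environment domain invariant: `dom e = fv t`, hereditarily. -/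
  def Clo.DomInv : Clo → Prop
    | .mk t e => e.dom = t.fv ∧ Env.DomInvE e
  def Env.DomInvE : Env → Prop
    | .nil => True
    | .cons _ c e => Clo.DomInv c ∧ Env.DomInvE e
end

/-- Size of the left address of (the first occurrence of) `u` in the code `t0`:
the binary length of its index in the in-order enumeration of the constructors of `t0`. -/
def addrSize (t0 u : Term) : ℕ := Nat.size (t0.inorder.idxOf u)

mutual
  /-- Size of a closure, relative to the initial code `t0`. -/
  def Clo.size : Term → Clo → ℕ
    | t0, .mk u e => addrSize t0 u + Env.sizeE t0 e
  /-- Size of an environment, relative to the initial code `t0`. -/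
  def Env.sizeE : Term → Env → ℕ
    | _, .nil => 0
    | t0, .cons x c e => addrSize t0 (Term.var x) + Clo.size t0 c + Env.sizeE t0 e
end

def stackSize (t0 : Term) (S : List Clo) : ℕ := (S.map (Clo.size t0)).sum

/-- States of the (Naive/Space) KAM. -/
structure State where
  tm : Term
  env : Env
  stk : List Clo

/-- Size of a state, relative to the initial code `t0`. -/
def State.size (t0 : Term) (s : State) : ℕ :=
  addrSize t0 s.tm + Env.sizeE t0 s.env + stackSize t0 s.stk

/-- Closure count of a state: total number of closures occurring in it,
hereditarily and without sharing (the active term/environment pair is a closure). -/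
def State.count (s : State) : ℕ :=
  1 + Env.count s.env + (s.stk.map Clo.count).sum

def State.decode (s : State) : Term :=
  s.stk.foldl (fun a c => Term.app a c.decode) (Env.decode s.tm s.env)

def initState (t : Term) : State := ⟨t, .nil, []⟩

/-! The Naive KAM. -/
inductive NK : State → State → Prop
  | sea (t u : Term) (e : Env) (S : List Clo) :
      NK ⟨.app t u, e, S⟩ ⟨t, e, .mk u e :: S⟩
  | beta (x : ℕ) (t : Term) (e : Env) (c : Clo) (S : List Clo) :
      NK ⟨.lam x t, e, c :: S⟩ ⟨t, .cons x c e, S⟩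
  | sub {x : ℕ} {e : Env} {u : Term} {e' : Env} (S : List Clo) :
      Env.lookup e x = some (.mk u e') → NK ⟨.var x, e, S⟩ ⟨u, e', S⟩

def NKFinal (s : State) : Prop := ∀ s', ¬ NK s s'

/-- Naive KAM runs counting the number of β-transitions. -/
inductive NKRun : ℕ → State → State → Prop
  | refl (s : State) : NKRun 0 s s
  | sea {t u : Term} {e : Env} {S : List Clo} {s' : State} {n : ℕ} :
      NKRun n ⟨t, e, .mk u e :: S⟩ s' → NKRun n ⟨.app t u, e, S⟩ s'
  | beta {x : ℕ} {t : Term} {e : Env} {c : Clo} {S : List Clo} {s' : State} {n : ℕ} :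
      NKRun n ⟨t, .cons x c e, S⟩ s' → NKRun (n + 1) ⟨.lam x t, e, c :: S⟩ s'
  | sub {x : ℕ} {e : Env} {u : Term} {e' : Env} {S : List Clo} {s' : State} {n : ℕ} :
      Env.lookup e x = some (.mk u e') → NKRun n ⟨u, e', S⟩ s' → NKRun n ⟨.var x, e, S⟩ s'

/-! The Space KAM. -/
inductive SK : State → State → Prop
  | seav {t : Term} {x : ℕ} {e : Env} {c : Clo} (S : List Clo) :
      Env.lookup e x = some c →
      SK ⟨.app t (.var x), e, S⟩ ⟨t, e.restrict t.fv, c :: S⟩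
  | seanv {t u : Term} {e : Env} (S : List Clo) :
      (∀ x, u ≠ .var x) →
      SK ⟨.app t u, e, S⟩ ⟨t, e.restrict t.fv, .mk u (e.restrict u.fv) :: S⟩
  | betaw {x : ℕ} {t : Term} {e : Env} (c : Clo) (S : List Clo) :
      x ∉ t.fv → SK ⟨.lam x t, e, c :: S⟩ ⟨t, e, S⟩
  | betanw {x : ℕ} {t : Term} {e : Env} (c : Clo) (S : List Clo) :
      x ∈ t.fv → SK ⟨.lam x t, e, c :: S⟩ ⟨t, .cons x c e, S⟩
  | sub {x : ℕ} {e : Env} {u : Term} {e' : Env} (S : List Clo) :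
      Env.lookup e x = some (.mk u e') → SK ⟨.var x, e, S⟩ ⟨u, e', S⟩

def SKFinal (s : State) : Prop := ∀ s', ¬ SK s s'

/-- Space KAM runs counting the number of β-transitions (`→βw` and `→β¬w`). -/
inductive SKRun : ℕ → State → State → Prop
  | refl (s : State) : SKRun 0 s s
  | seav {t : Term} {x : ℕ} {e : Env} {c : Clo} {S : List Clo} {s' : State} {n : ℕ} :
      Env.lookup e x = some c →
      SKRun n ⟨t, e.restrict t.fv, c :: S⟩ s' → SKRun n ⟨.app t (.var x), e, S⟩ s'
  | seanv {t u : Term} {e : Env} {S : List Clo} {s' : State} {n : ℕ} :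
      (∀ x, u ≠ .var x) →
      SKRun n ⟨t, e.restrict t.fv, .mk u (e.restrict u.fv) :: S⟩ s' →
      SKRun n ⟨.app t u, e, S⟩ s'
  | betaw {x : ℕ} {t : Term} {e : Env} {c : Clo} {S : List Clo} {s' : State} {n : ℕ} :
      x ∉ t.fv → SKRun n ⟨t, e, S⟩ s' → SKRun (n + 1) ⟨.lam x t, e, c :: S⟩ s'
  | betanw {x : ℕ} {t : Term} {e : Env} {c : Clo} {S : List Clo} {s' : State} {n : ℕ} :
      x ∈ t.fv → SKRun n ⟨t, .cons x c e, S⟩ s' → SKRun (n + 1) ⟨.lam x t, e, c :: S⟩ s'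
  | sub {x : ℕ} {e : Env} {u : Term} {e' : Env} {S : List Clo} {s' : State} {n : ℕ} :
      Env.lookup e x = some (.mk u e') → SKRun n ⟨u, e', S⟩ s' → SKRun n ⟨.var x, e, S⟩ s'

/-! Concrete combinators. -/

/-- I := λx.x -/
def tmI : Term := .lam 0 (.var 0)
/-- θ := λx.λy.y (x x y)  (variables: x := 0, y := 1) -/
def tmTheta : Term := .lam 0 (.lam 1 (.app (.var 1) (.app (.app (.var 0) (.var 0)) (.var 1))))
/-- fix := θ θ -/
def tmFix : Term := .app tmTheta tmTheta
/-- x x y -/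
def xxy : Term := .app (.app (.var 0) (.var 0)) (.var 1)
/-- toyaux := λf.λz. z f f I  (f := 3, z := 2) -/
def tmToyaux : Term := .lam 3 (.lam 2 (.app (.app (.app (.var 2) (.var 3)) (.var 3)) tmI))
/-- toy := fix toyaux -/
def tmToy : Term := .app tmFix tmToyaux

/-- Scott encoding of binary strings (false = 0, true = 1; x0 := 4, x1 := 5, xε := 6):
`⟨ε⟩ := λx0.λx1.λxε.xε`, `⟨b·r⟩ := λx0.λx1.λxε.xb ⟨r⟩`. -/
def encStr : List Bool → Term
  | [] => .lam 4 (.lam 5 (.lam 6 (.var 6)))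
  | b :: r => .lam 4 (.lam 5 (.lam 6 (.app (.var (if b then 5 else 4)) (encStr r))))

/-- A variable fresh for `t`. -/
def freshVar (t : Term) : ℕ := t.fv.sup id + 1

/-- η-expansion: `η(t) := λx. t x` with `x ∉ fv t`. -/
def Term.eta (t : Term) : Term := .lam (freshVar t) (.app t (.var (freshVar t)))

/-- n-fold η-expansion. -/
def etaN (n : ℕ) (t : Term) : Term := Term.eta^[n] t

/-! Environment families for the Naive KAM scrolling invariant
(variables: x := 0, y := 1, z := 2, f := 3, x0 := 4, x1 := 5, xε := 6). -/

/-- `e0 := [x←(θ,ε)]·[y←(toyaux,ε)]`, `e(i+1) := [x←(x,ei)]·[y←(y,ei)]`. -/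
def eE : ℕ → Env
  | 0 => .cons 0 (.mk tmTheta .nil) (.cons 1 (.mk tmToyaux .nil) .nil)
  | i + 1 => .cons 0 (.mk (.var 0) (eE i)) (.cons 1 (.mk (.var 1) (eE i)) .nil)

/-- `e″0 := ε`, `e″(i+1) := [xε←(I,e′i)]·[x1←(f,e′i)]·[x0←(f,e′i)]·e″i`
(with `e′i` inlined). -/
def eDD (s : List Bool) : ℕ → Env
  | 0 => .nil
  | i + 1 =>
    let ep : Env := .cons 2 (.mk (encStr (s.drop i)) (eDD s i)) (.cons 3 (.mk xxy (eE i)) .nil)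
    .cons 6 (.mk tmI ep) (.cons 5 (.mk (.var 3) ep) (.cons 4 (.mk (.var 3) ep) (eDD s i)))

/-- `e′i := [z←(⟨b(i+1)⋯bn⟩, e″i)]·[f←(x x y, ei)]`. -/
def eP (s : List Bool) (i : ℕ) : Env :=
  .cons 2 (.mk (encStr (s.drop i)) (eDD s i)) (.cons 3 (.mk xxy (eE i)) .nil)

/-! The family `tn` for the abstract-time overhead explosion
(variables `xi := i`). -/

/-- `x0 x1 ⋯ xn`. -/
def varsApp : ℕ → Term
  | 0 => .var 0
  | n + 1 => .app (varsApp n) (.var (n + 1))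

/-- Term component of `Sn`: `x0 x0` for `n = 0`, `x0 ⋯ xn` for `n ≥ 1`. -/
def sTerm : ℕ → Term
  | 0 => .app (.var 0) (.var 0)
  | n + 1 => varsApp (n + 1)

/-- `e0 := [x0←(I,ε)]`, `e(n+1) := [x(n+1)←Sn]·en`. -/
def eN : ℕ → Env
  | 0 => .cons 0 (.mk tmI .nil) .nil
  | n + 1 => .cons (n + 1) (.mk (sTerm n) (eN n)) (eN n)

/-- `Sn := (sTerm n, en)`. -/
def sClo (n : ℕ) : Clo := .mk (sTerm n) (eN n)

/-- `Ci⟨t⟩ := λxi. t (x0 ⋯ xi)` (with `C0⟨t⟩ = λx0. t (x0 x0)`). -/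
def cPlug (i : ℕ) (t : Term) : Term := .lam i (.app t (sTerm i))

/-- `C0⟨C1⟨⋯Cn⟨t⟩⋯⟩⟩`. -/
def nest (n : ℕ) (t : Term) : Term := (List.range (n + 1)).foldr cPlug t

/-- `tn := C0⟨C1⟨⋯Cn⟨λy.I⟩⋯⟩⟩ I`. -/
def tN (n : ℕ) : Term := .app (nest n (.lam 1 tmI)) tmI

/-! Global-copy scrolling terms (s′ := 7, z := 2, x := 0, f := 3). -/

/-- `λf.λs′. s′ f f z` (free variable z). -/
def tScroll : Term :=
  .lam 3 (.lam 7 (.app (.app (.app (.var 7) (.var 3)) (.var 3)) (.var 2)))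

/-- `glCpy := λx.( fix (λf.λs′. s′ f f x) ) x`. -/
def glCpy : Term :=
  .lam 0 (.app (.app tmFix
    (.lam 3 (.lam 7 (.app (.app (.app (.var 7) (.var 3)) (.var 3)) (.var 0)))))
    (.var 0))

/-! The Space LAM. -/

structure LState where
  dump : List (Clo × List Clo)
  tm : Term
  env : Env
  stk : List Clo

inductive LAM : LState → LState → Prop
  | sea {D : List (Clo × List Clo)} {t u : Term} {e : Env} {S : List Clo} :
      LAM ⟨D, .app t u, e, S⟩ ⟨(.mk t (e.restrict t.fv), S) :: D, u, e.restrict u.fv, []⟩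
  | ret {D : List (Clo × List Clo)} {u : Term} {e' : Env} {S : List Clo}
      {x : ℕ} {t : Term} {e : Env} :
      LAM ⟨(.mk u e', S) :: D, .lam x t, e, []⟩ ⟨D, u, e', .mk (.lam x t) e :: S⟩
  | betaw {D : List (Clo × List Clo)} {x : ℕ} {t : Term} {e : Env} {c : Clo} {S : List Clo} :
      x ∉ t.fv → LAM ⟨D, .lam x t, e, c :: S⟩ ⟨D, t, e, S⟩
  | betanw {D : List (Clo × List Clo)} {x : ℕ} {t : Term} {e : Env} {c : Clo} {S : List Clo} :
      x ∈ t.fv → LAM ⟨D, .lam x t, e, c :: S⟩ ⟨D, t, .cons x c e, S⟩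
  | sub {D : List (Clo × List Clo)} {x : ℕ} {e : Env} {u : Term} {e' : Env} {S : List Clo} :
      Env.lookup e x = some (.mk u e') → LAM ⟨D, .var x, e, S⟩ ⟨D, u, e', S⟩

def LFinal (ls : LState) : Prop := ∀ ls', ¬ LAM ls ls'

/-- The Space KAM state `(t,e,S)` seen as the Space LAM state `(ε,t,e,S)`. -/
def embed (s : State) : LState := ⟨[], s.tm, s.env, s.stk⟩

def lInit (t : Term) : LState := ⟨[], t, .nil, []⟩

def LState.size (t0 : Term) (ls : LState) : ℕ :=
  (ls.dump.map (fun p => Clo.size t0 p.1 + stackSize t0 p.2)).sum +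
    addrSize t0 ls.tm + Env.sizeE t0 ls.env + stackSize t0 ls.stk

/-- A LAM-sequence from `a` whose first state with empty dump after `a` is its target. -/
inductive LRunToEmpty : LState → LState → Prop
  | single {a b : LState} : LAM a b → b.dump = [] → LRunToEmpty a b
  | cons {a b c : LState} : LAM a b → b.dump ≠ [] → LRunToEmpty b c → LRunToEmpty a c

/-! Log-sensitive Turing machines. -/

/-- Input-tape alphabet {0, 1, L, R}. -/
inductive ISym : Type | zero | one | lend | rend
deriving DecidableEq

/-- Work-tape alphabet {0, 1, □}. -/
inductive WSym : Type | zero | one | blank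
deriving DecidableEq

/-- Head moves. -/
inductive Move : Type | L | R | N
deriving DecidableEq

/-- A log-sensitive Turing machine: states `Fin n`, initial state, final states
`qtrue = s1` and `qfalse = s0`, and a deterministic transition function reading the
current state and the two scanned symbols, writing on the work tape, moving both
heads, and changing state (`none` = halt). -/
structure TM where
  n : ℕ
  start : Fin n
  qtrue : Fin n
  qfalse : Fin n
  δ : Fin n → ISym → WSym → Option (Fin n × WSym × Move × Move)

/-- A configuration: state, input-head position (on the tape `L i R`), and the
work tape split as (left part, reversed) / scanned symbol / (right part). -/
structure Config (M : TM) where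
  q : Fin M.n
  ipos : ℕ
  wl : List WSym
  wcur : WSym
  wr : List WSym

/-- The symbol of the input tape `L i R` at a given position. -/
def inputAt (i : List Bool) (p : ℕ) : ISym :=
  if p = 0 then .lend
  else if h : p - 1 < i.length then (if i.get ⟨p - 1, h⟩ then .one else .zero)
  else .rend

def moveIpos (p : ℕ) : Move → ℕ
  | .L => p - 1
  | .R => p + 1
  | .N => p

def moveWork (wl : List WSym) (c : WSym) (wr : List WSym) : Move → List WSym × WSym × List WSym
  | .L => match wl with
    | [] => ([], .blank, c :: wr)
    | a :: l => (l, a, c :: wr)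
  | .R => match wr with
    | [] => (c :: wl, .blank, [])
    | a :: r => (c :: wl, a, r)
  | .N => (wl, c, wr)

/-- One transition of the TM `M` on input `i`. -/
def TMStep (M : TM) (i : List Bool) (c c' : Config M) : Prop :=
  ∃ q' w mi mw, M.δ c.q (inputAt i c.ipos) c.wcur = some (q', w, mi, mw) ∧
    c'.q = q' ∧ c'.ipos = moveIpos c.ipos mi ∧
    (c'.wl, c'.wcur, c'.wr) = moveWork c.wl w c.wr mw

def initConfig (M : TM) : Config M := ⟨M.start, 0, [], .blank, []⟩

/-- Number of work-tape cells used by a configuration. -/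
def Config.workSize {M : TM} (c : Config M) : ℕ := c.wl.length + 1 + c.wr.length

def TMFinal (M : TM) (i : List Bool) (c : Config M) : Prop := ∀ c', ¬ TMStep M i c c'

/-- `⟨1⟩ := λx.λy.x` and `⟨0⟩ := λx.λy.y`. -/
def encBool (b : Bool) : Term :=
  if b then .lam 0 (.lam 1 (.var 0)) else .lam 0 (.lam 1 (.var 1))

/-! Decoding turns the Naive KAM into weak head reduction. As long as every closure of the
state is closed, which the transitions preserve, search and substitution transitions leave the
decoded term unchanged and a β-transition decodes to exactly one weak head step. Conversely,
search shrinks the code and substitution shrinks the environment, so from every closed state the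
machine reaches, without β-transitions, a state whose code is an abstraction; there it either
halts, on a weak head normal decoding, or fires β, which by determinism of →wh is the next step
of the given reduction sequence. -/

namespace Term

theorem fv_subst_subset (x : ℕ) (u t : Term) : (subst x u t).fv ⊆ t.fv \ {x} ∪ u.fv := by
  induction t with
  | var y => by_cases h : y = x <;> simp [subst, fv, h]
  | lam y t ih =>
    by_cases h : y = x
    · subst h; simp [subst, fv]
    · intro a ha
      simp only [subst, h, if_false, fv, Finset.mem_sdiff, Finset.mem_singleton] at ha
      have := ih ha.1
      simp only [fv, Finset.mem_union, Finset.mem_sdiff, Finset.mem_singleton] at this ⊢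
      tauto
  | app t r iht ihr =>
    simp only [subst, fv, Finset.union_sdiff_distrib]
    exact Finset.union_subset (iht.trans (by gcongr; exact Finset.subset_union_left))
      (ihr.trans (by gcongr; exact Finset.subset_union_right))

theorem subst_eq_self {x : ℕ} {t : Term} (u : Term) (h : x ∉ t.fv) : subst x u t = t := by
  induction t with
  | var y => simp_all [subst, fv, eq_comm]
  | lam y t ih =>
    by_cases hy : y = x
    · simp [subst, hy]
    · simp only [fv, Finset.mem_sdiff, Finset.mem_singleton, not_and, not_not] at h
      simp [subst, hy, ih fun hx => hy (h hx).symm]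
  | app t r iht ihr => simp_all [subst, fv]

theorem notMem_fv_subst {u : Term} (hu : u.fv = ∅) (x : ℕ) (t : Term) :
    x ∉ (subst x u t).fv := fun hx => by
  simpa [hu] using fv_subst_subset x u t hx

theorem subst_comm {x y : ℕ} (hxy : x ≠ y) {u v : Term} (hu : u.fv = ∅) (hv : v.fv = ∅)
    (t : Term) : subst y v (subst x u t) = subst x u (subst y v t) := by
  induction t with
  | var z =>
    by_cases hzx : z = x
    · subst hzx; simp [subst, hxy, subst_eq_self, hu]
    · by_cases hzy : z = y
      · subst hzy; simp [subst, hzx, subst_eq_self, hv]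
      · simp [subst, hzx, hzy]
  | lam z t ih =>
    by_cases hzx : z = x
    · subst hzx; simp [subst, hxy]
    · by_cases hzy : z = y
      · subst hzy; simp [subst, hzx]
      · simp [subst, hzx, hzy, ih]
  | app t r iht ihr => simp [subst, iht, ihr]

end Term

namespace Env

def erase (x : ℕ) : Env → Env
  | .nil => .nil
  | .cons y c e => if y = x then erase x e else .cons y c (erase x e)

theorem count_lt_of_lookup {x : ℕ} {u : Term} {e' : Env} :
    ∀ {e : Env}, e.lookup x = some (.mk u e') → e'.count < e.count
  | .nil, h => by simp [lookup] at h
  | .cons y c e, h => by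
    simp only [lookup] at h
    split_ifs at h with hyx
    · cases h; simp only [count, Clo.count]; omega
    · have := count_lt_of_lookup h; simp only [count]; omega

theorem closed_of_lookup {x : ℕ} {c : Clo} :
    ∀ {e : Env}, e.ClosedE → e.lookup x = some c → c.Closed
  | .nil, _, h => by simp [lookup] at h
  | .cons y c' e, ⟨hc', he⟩, h => by
    simp only [lookup] at h
    split_ifs at h
    · cases h; exact hc'
    · exact closed_of_lookup he h

theorem exists_lookup_of_mem_dom {x : ℕ} : ∀ {e : Env}, x ∈ e.dom → ∃ c, e.lookup x = some c
  | .nil, h => by simp [dom] at h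
  | .cons y c e, h => by
    by_cases hyx : y = x
    · exact ⟨c, by simp [lookup, hyx]⟩
    · simp only [dom, Finset.mem_insert, Ne.symm hyx, false_or] at h
      simpa [lookup, hyx] using exists_lookup_of_mem_dom h

end Env

mutual

theorem Clo.Closed.fv_decode : ∀ {c : Clo}, c.Closed → c.decode.fv = ∅
  | .mk t _, ⟨ht, he⟩ => Finset.subset_empty.mp <|
      (Env.fv_decode_subset t he).trans (Finset.sdiff_eq_empty_iff_subset.mpr ht).subset

theorem Env.fv_decode_subset : ∀ (t : Term) {e : Env}, e.ClosedE →
    (Env.decode t e).fv ⊆ t.fv \ e.dom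
  | t, .nil, _ => by simp [Env.decode, Env.dom]
  | t, .cons x c e, ⟨hc, he⟩ => by
    refine (Env.fv_decode_subset _ he).trans fun a ha => ?_
    have := Term.fv_subst_subset x c.decode t (Finset.mem_sdiff.mp ha).1
    simp only [hc.fv_decode, Finset.union_empty, Finset.mem_sdiff, Finset.mem_singleton] at this
    simp only [Env.dom, Finset.mem_sdiff, Finset.mem_insert] at ha ⊢
    tauto

end

namespace Env

theorem decode_app (t u : Term) : ∀ e : Env, decode (.app t u) e = .app (decode t e) (decode u e)
  | .nil => rfl
  | .cons _ _ e => decode_app _ _ e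

theorem decode_eq_self {t : Term} (ht : t.fv = ∅) : ∀ e : Env, decode t e = t
  | .nil => rfl
  | .cons _ _ e => by
    rw [decode, Term.subst_eq_self _ (by simp [ht]), decode_eq_self ht e]

theorem decode_var {x : ℕ} {c : Clo} :
    ∀ {e : Env}, e.ClosedE → e.lookup x = some c → decode (.var x) e = c.decode
  | .nil, _, h => by simp [lookup] at h
  | .cons y c' e, ⟨hc', he⟩, h => by
    simp only [lookup] at h
    split_ifs at h with hyx
    · cases h
      rw [decode, Term.subst, if_pos hyx.symm, decode_eq_self hc'.fv_decode]
    · rw [decode, Term.subst, if_neg (Ne.symm hyx), decode_var he h]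

theorem decode_lam (x : ℕ) :
    ∀ (t : Term) (e : Env), decode (.lam x t) e = .lam x (decode t (e.erase x))
  | t, .nil => rfl
  | t, .cons y c e => by
    by_cases hyx : y = x
    · rw [decode, Term.subst, if_pos hyx.symm, erase, if_pos hyx, decode_lam]
    · rw [decode, Term.subst, if_neg (Ne.symm hyx), erase, if_neg hyx, decode_lam, decode]

theorem subst_decode_erase {x : ℕ} {u : Term} (hu : u.fv = ∅) :
    ∀ (t : Term) {e : Env}, e.ClosedE →
      Term.subst x u (decode t (e.erase x)) = decode (Term.subst x u t) e
  | t, .nil, _ => rfl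
  | t, .cons y c e, ⟨hc, he⟩ => by
    by_cases hyx : y = x
    · subst hyx
      rw [erase, if_pos rfl, decode, Term.subst_eq_self _ (Term.notMem_fv_subst hu y t),
        subst_decode_erase hu t he]
    · rw [erase, if_neg hyx, decode, decode, subst_decode_erase hu _ he,
        Term.subst_comm (Ne.symm hyx) hu hc.fv_decode]

end Env

theorem Whr.foldl_app {a b : Term} (h : Whr a b) (S : List Clo) :
    Whr (S.foldl (fun a c => .app a c.decode) a) (S.foldl (fun a c => .app a c.decode) b) := by
  induction S generalizing a b with
  | nil => exact h
  | cons c S ih => exact ih (.appL _ h)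

theorem Whr.deterministic {a b b' : Term} (h : Whr a b) (h' : Whr a b') : b = b' := by
  induction h generalizing b' with
  | beta => cases h' with
    | beta => rfl
    | appL _ h' => cases h'
  | appL u h ih => cases h' with
    | beta => cases h
    | appL _ h' => rw [ih h']

theorem whNormal_lam (x : ℕ) (t : Term) : WhNormal (.lam x t) := fun _ h => nomatch h

theorem NSteps.eq_of_normal {α : Type*} {R : α → α → Prop} {a b : α} {n : ℕ}
    (ha : ∀ b, ¬ R a b) (h : NSteps R n a b) : n = 0 ∧ b = a := by
  cases h with
  | refl => exact ⟨rfl, rfl⟩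
  | head hab _ => exact absurd hab (ha _)

theorem NSteps.of_whr_of_whNormal {a b c : Term} {n : ℕ} (h : NSteps Whr n a c) (hab : Whr a b)
    (hc : WhNormal c) : ∃ m, n = m + 1 ∧ NSteps Whr m b c := by
  cases h with
  | refl => exact absurd hab (hc _)
  | head hab' h => exact ⟨_, rfl, hab.deterministic hab' ▸ h⟩

theorem NSteps.zero_iff {α : Type*} {R : α → α → Prop} {a b : α} : NSteps R 0 a b ↔ a = b :=
  ⟨fun h => by cases h; rfl, fun h => h ▸ .refl a⟩

namespace State

def Closed (s : State) : Prop :=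
  s.tm.fv ⊆ s.env.dom ∧ s.env.ClosedE ∧ ∀ c ∈ s.stk, c.Closed

theorem closed_init {t : Term} (ht : t.closed) : (initState t).Closed :=
  ⟨by simp [initState, show t.fv = ∅ from ht], trivial, by simp [initState]⟩

theorem Closed.of_nk {s s' : State} (hs : s.Closed) (h : NK s s') : s'.Closed := by
  obtain ⟨hfv, he, hS⟩ := hs
  cases h with
  | sea t u e S =>
    simp only [Term.fv, Finset.union_subset_iff] at hfv
    exact ⟨hfv.1, he, List.forall_mem_cons.mpr ⟨⟨hfv.2, he⟩, hS⟩⟩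
  | beta x t e c S =>
    rw [List.forall_mem_cons] at hS
    refine ⟨?_, ⟨hS.1, he⟩, hS.2⟩
    rw [Env.dom, Finset.insert_eq]
    exact sdiff_le_iff.mp hfv
  | sub S hl => exact ⟨(Env.closed_of_lookup he hl).1, (Env.closed_of_lookup he hl).2, hS⟩

theorem decode_sea (t u : Term) (e : Env) (S : List Clo) :
    decode ⟨.app t u, e, S⟩ = decode ⟨t, e, .mk u e :: S⟩ := by
  simp [decode, Env.decode_app, Clo.decode]

theorem Closed.decode_sub {x : ℕ} {e : Env} {u : Term} {e' : Env} {S : List Clo}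
    (hs : Closed ⟨.var x, e, S⟩) (hl : e.lookup x = some (.mk u e')) :
    decode ⟨.var x, e, S⟩ = decode ⟨u, e', S⟩ := by
  rw [decode, Env.decode_var hs.2.1 hl, Clo.decode, decode]

theorem Closed.whr_decode_beta {x : ℕ} {t : Term} {e : Env} {c : Clo} {S : List Clo}
    (hs : Closed ⟨.lam x t, e, c :: S⟩) :
    Whr (decode ⟨.lam x t, e, c :: S⟩) (decode ⟨t, .cons x c e, S⟩) := by
  rw [decode, decode, List.foldl_cons, Env.decode_lam, Env.decode,
    ← Env.subst_decode_erase (hs.2.2 c List.mem_cons_self).fv_decode t hs.2.1]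
  exact (Whr.beta x _ c.decode).foldl_app S

theorem whNormal_decode_lam (x : ℕ) (t : Term) (e : Env) :
    WhNormal (decode ⟨.lam x t, e, []⟩) := by
  rw [decode, List.foldl_nil, Env.decode_lam]
  exact whNormal_lam _ _

end State

theorem NKRun.trans {m n : ℕ} {s₁ s₂ s₃ : State} (h₁ : NKRun m s₁ s₂) (h₂ : NKRun n s₂ s₃) :
    NKRun (n + m) s₁ s₃ := by
  induction h₁ with
  | refl => exact h₂
  | sea _ ih => exact .sea (ih h₂)
  | beta _ ih => exact .beta (ih h₂)
  | sub hl _ ih => exact .sub hl (ih h₂)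

theorem NKRun.nsteps_decode {n : ℕ} {s s' : State} (h : NKRun n s s') (hs : s.Closed) :
    NSteps Whr n s.decode s'.decode ∧ s'.Closed := by
  induction h with
  | refl => exact ⟨.refl _, hs⟩
  | sea _ ih =>
    rw [State.decode_sea]
    exact ih (hs.of_nk (.sea _ _ _ _))
  | beta _ ih =>
    obtain ⟨hsteps, hs'⟩ := ih (hs.of_nk (.beta _ _ _ _ _))
    exact ⟨.head hs.whr_decode_beta hsteps, hs'⟩
  | sub hl _ ih =>
    rw [hs.decode_sub hl]
    exact ih (hs.of_nk (.sub _ hl))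

theorem NKFinal.eq_lam {s : State} (hs : s.Closed) (hf : NKFinal s) :
    ∃ x t e, s = ⟨.lam x t, e, []⟩ := by
  obtain ⟨tm, e, S⟩ := s
  cases tm with
  | var x =>
    obtain ⟨⟨u, e'⟩, hl⟩ := Env.exists_lookup_of_mem_dom (hs.1 (Finset.mem_singleton_self x))
    exact absurd (.sub S hl) (hf _)
  | lam x t =>
    cases S with
    | nil => exact ⟨x, t, e, rfl⟩
    | cons c S => exact absurd (.beta x t e c S) (hf _)
  | app t u => exact absurd (.sea t u e S) (hf _)

theorem State.Closed.exists_nkRun_lam {s : State} (hs : s.Closed) :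
    ∃ x t e S, NKRun 0 s ⟨.lam x t, e, S⟩ := by
  obtain ⟨tm, e, S⟩ := s
  induction h : e.count using Nat.strong_induction_on generalizing tm e S with
  | _ k ihk =>
  induction tm generalizing S with
  | var x =>
    obtain ⟨⟨u, e'⟩, hl⟩ := Env.exists_lookup_of_mem_dom (hs.1 (Finset.mem_singleton_self x))
    obtain ⟨y, t, e'', S', hrun⟩ :=
      ihk _ (h ▸ Env.count_lt_of_lookup hl) u e' S (hs.of_nk (.sub S hl)) rfl
    exact ⟨y, t, e'', S', .sub hl hrun⟩
  | lam x t => exact ⟨x, t, e, S, .refl _⟩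
  | app t u iht =>
    obtain ⟨y, t', e', S', hrun⟩ := iht _ (hs.of_nk (.sea t u e S))
    exact ⟨y, t', e', S', .sea hrun⟩

theorem State.Closed.exists_nkRun_of_nsteps {u : Term} (hu : WhNormal u) {n : ℕ} :
    ∀ {s : State}, s.Closed → NSteps Whr n s.decode u →
      ∃ s', NKRun n s s' ∧ NKFinal s' ∧ s'.decode = u := by
  induction n using Nat.strong_induction_on with
  | _ n ih =>
  intro s hs hsteps
  obtain ⟨x, t, e, S, hrun⟩ := hs.exists_nkRun_lam
  obtain ⟨hdecode, hs'⟩ := hrun.nsteps_decode hs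
  rw [NSteps.zero_iff.mp hdecode] at hsteps
  cases S with
  | nil =>
    obtain ⟨rfl, rfl⟩ := hsteps.eq_of_normal (State.whNormal_decode_lam x t e)
    exact ⟨_, hrun, (fun _ h => nomatch h), rfl⟩
  | cons c S =>
    obtain ⟨m, rfl, hsteps'⟩ := hsteps.of_whr_of_whNormal hs'.whr_decode_beta hu
    obtain ⟨s', hrun', hf, hd⟩ := ih m m.lt_succ_self (hs'.of_nk (.beta x t e c S)) hsteps'
    exact ⟨s', hrun.trans (.beta hrun'), hf, hd⟩

/-- The Naive KAM implements Closed Call-by-Name. -/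
theorem naive_kam_implements_closed_cbn
    (t : Term) (ht : t.closed) (n : ℕ) (u : Term) :
    (NSteps Whr n t u ∧ WhNormal u) ↔
      (∃ s : State, NKRun n (initState t) s ∧ NKFinal s ∧ s.decode = u) := by
  have hinit := State.closed_init ht
  constructor
  · rintro ⟨hsteps, hu⟩
    exact hinit.exists_nkRun_of_nsteps hu hsteps
  · rintro ⟨s, hrun, hfinal, rfl⟩
    obtain ⟨hsteps, hs⟩ := hrun.nsteps_decode hinit
    obtain ⟨x, t', e, rfl⟩ := hfinal.eq_lam hs
    exact ⟨hsteps, State.whNormal_decode_lam x t' e⟩
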